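/- arXiv:2603.09766 — 4 statements merged into one kernel-verified Lean document; each statement's English description precedes it below -/
import Mathlib

section
/- Let K be a field of characteristic ≠ 2 and V a K-vector space with finrank V = n ≥ 2. The subalgebra of the exterior algebra of V generated by all commutators [a, b] = a*b - b*a (a, b ∈ ⋀ V) equals the even part A_even = ⨁_i ⋀^{2i} V. -/
/-!
By graded commutativity of the exterior algebra, even elements are central. Splitting
`a = a₀ + a₁` and `b = b₀ + b₁` into even and odd parts, the commutator `[a, b]` therefore
reduces to `a₁ b₁ - b₁ a₁`, which is even. Conversely the even part is generated as an algebra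
by the products `ι v * ι w`, and `ι v * ι w = ½ [ι v, ι w]` once `2` is invertible.
-/

section

variable {R M : Type*} [CommRing R] [AddCommGroup M] [Module R M]

namespace CliffordAlgebra

theorem evenOdd_zero_eq_iSup_pow_two_mul (Q : QuadraticForm R M) :
    evenOdd Q 0 = ⨆ i : ℕ, LinearMap.range (ι Q) ^ (2 * i) := by
  refine le_antisymm (iSup_le fun ⟨n, hn⟩ => ?_) (iSup_le fun i => ?_)
  · obtain ⟨i, rfl⟩ := (ZMod.natCast_eq_zero_iff_even.mp hn).two_dvd
    exact le_iSup (fun i : ℕ => LinearMap.range (ι Q) ^ (2 * i)) i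
  · exact le_iSup_of_le ⟨2 * i, ZMod.natCast_eq_zero_iff_even.mpr (even_two_mul i)⟩ le_rfl

theorem exists_add_mem_evenOdd (Q : QuadraticForm R M) (x : CliffordAlgebra Q) :
    ∃ x₀ ∈ evenOdd Q 0, ∃ x₁ ∈ evenOdd Q 1, x₀ + x₁ = x :=
  Submodule.mem_sup.mp ((evenOdd_isCompl Q).sup_eq_top ▸ Submodule.mem_top)

end CliffordAlgebra

open CliffordAlgebra

namespace ExteriorAlgebra

theorem mul_eq_neg_one_pow_smul_mul_of_mem_evenOdd {i j : ZMod 2} {x y : ExteriorAlgebra R M}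
    (hx : x ∈ evenOdd 0 i) (hy : y ∈ evenOdd 0 j) :
    x * y = (-1 : ℤˣ) ^ (j * i) • (y * x) := by
  have hmap := map_mul_map_of_isOrtho_of_mem_evenOdd (QuadraticMap.Isometry.id 0)
      (QuadraticMap.Isometry.id 0) (fun _ _ => by simp [QuadraticMap.IsOrtho]) x y hx hy
  rwa [CliffordAlgebra.map_id, AlgHom.id_apply, AlgHom.id_apply] at hmap

theorem commute_of_mem_evenOdd_zero {x : ExteriorAlgebra R M} (hx : x ∈ evenOdd 0 0)
    (y : ExteriorAlgebra R M) : Commute x y := by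
  obtain ⟨y₀, hy₀, y₁, hy₁, rfl⟩ := exists_add_mem_evenOdd (0 : QuadraticForm R M) y
  refine .add_right ?_ ?_ <;> rw [commute_iff_eq]
  · simpa using mul_eq_neg_one_pow_smul_mul_of_mem_evenOdd hx hy₀
  · simpa using mul_eq_neg_one_pow_smul_mul_of_mem_evenOdd hx hy₁

theorem commutator_mem_evenOdd_zero (a b : ExteriorAlgebra R M) :
    a * b - b * a ∈ evenOdd 0 0 := by
  obtain ⟨a₀, ha₀, a₁, ha₁, rfl⟩ := exists_add_mem_evenOdd (0 : QuadraticForm R M) a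
  obtain ⟨b₀, hb₀, b₁, hb₁, rfl⟩ := exists_add_mem_evenOdd (0 : QuadraticForm R M) b
  have hmul : ∀ {x y : ExteriorAlgebra R M}, x ∈ evenOdd 0 1 → y ∈ evenOdd 0 1 →
      x * y ∈ evenOdd 0 0 :=
    fun hx hy => evenOdd_mul_le _ 1 1 (Submodule.mul_mem_mul hx hy)
  have hcomm : (a₀ + a₁) * (b₀ + b₁) - (b₀ + b₁) * (a₀ + a₁) = a₁ * b₁ - b₁ * a₁ := by
    simp only [add_mul, mul_add, (commute_of_mem_evenOdd_zero ha₀ _).eq,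
      (commute_of_mem_evenOdd_zero hb₀ a₁).eq]
    abel
  rw [hcomm]
  exact sub_mem (hmul ha₁ hb₁) (hmul hb₁ ha₁)

theorem ι_mul_ι_eq_invOf_two_smul_commutator [Invertible (2 : R)] (m₁ m₂ : M) :
    ι R m₁ * ι R m₂ = ⅟(2 : R) • (ι R m₁ * ι R m₂ - ι R m₂ * ι R m₁) := by
  rw [eq_neg_of_add_eq_zero_right (ι_add_mul_swap m₁ m₂), sub_neg_eq_add, smul_add,
    invOf_two_smul_add_invOf_two_smul]

theorem adjoin_commutators_eq_even [Invertible (2 : R)] :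
    Algebra.adjoin R {x : ExteriorAlgebra R M | ∃ a b, x = a * b - b * a} =
      CliffordAlgebra.even 0 := by
  have mem_even (x : ExteriorAlgebra R M) : x ∈ even 0 ↔ x ∈ evenOdd 0 0 := by
    rw [← Subalgebra.mem_toSubmodule, even_toSubmodule]
  refine le_antisymm (Algebra.adjoin_le ?_) fun x hx => ?_
  · rintro _ ⟨a, b, rfl⟩
    exact (mem_even _).mpr (commutator_mem_evenOdd_zero a b)
  · rw [mem_even] at hx
    induction x, hx using even_induction with
    | algebraMap r => exact Subalgebra.algebraMap_mem _ r
    | add _ _ _ _ ihx ihy => exact add_mem ihx ihy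
    | ι_mul_ι_mul m₁ m₂ _ _ ih =>
      refine Subalgebra.mul_mem _ ?_ ih
      rw [ι_mul_ι_eq_invOf_two_smul_commutator]
      exact Subalgebra.smul_mem _ (Algebra.subset_adjoin <| Set.mem_ofPred.mpr ⟨_, _, rfl⟩) _

end ExteriorAlgebra

end

theorem commutator_subalgebra_eq_even_part_general {K : Type*} [Field K] {V : Type*} [AddCommGroup V]
    [Module K V] (hchar : ringChar K ≠ 2) :
    Subalgebra.toSubmodule
        (Algebra.adjoin K {x : ExteriorAlgebra K V | ∃ a b, x = a * b - b * a}) =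
      ⨆ i : ℕ, ⋀[K]^(2 * i) V := by
  have : Invertible (2 : K) := invertibleOfNonzero (Ring.two_ne_zero hchar)
  rw [ExteriorAlgebra.adjoin_commutators_eq_even, CliffordAlgebra.even_toSubmodule,
    CliffordAlgebra.evenOdd_zero_eq_iSup_pow_two_mul]

/-- For `char K ≠ 2` and `finrank V = n ≥ 2`, the subalgebra of the exterior algebra
generated by all commutators `a*b - b*a` equals the even part `⨁ᵢ ⋀^(2i) V`. -/
theorem commutator_subalgebra_eq_even_part {K : Type*} [Field K] {V : Type*} [AddCommGroup V]
    [Module K V] [FiniteDimensional K V] (hchar : ringChar K ≠ 2) {n : ℕ}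
    (hn : Module.finrank K V = n) (hn2 : 2 ≤ n) :
    Subalgebra.toSubmodule
        (Algebra.adjoin K {x : ExteriorAlgebra K V | ∃ a b, x = a * b - b * a}) =
      ⨆ i : ℕ, ⋀[K]^(2 * i) V :=
  commutator_subalgebra_eq_even_part_general hchar
end

section
/- Let K be a field and V a K-vector space. For every K-algebra automorphism f of the exterior algebra of V and every v ∈ V, the element f(ι v) lies in the augmentation ideal, i.e. its scalar (grade-zero) component is zero. Consequently, for every k ≥ 1 and every x ∈ ⋀^k V, f(x) lies in the sum of the exterior powers ⋀^j V with j ≥ k. -/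
open ExteriorAlgebra

/-- Every `K`-algebra automorphism `f` of the exterior algebra sends each `ι v` into the
augmentation ideal (its scalar component is zero); consequently for `k ≥ 1` it sends the
`k`-th exterior power into the sum of the exterior powers of grade at least `k`. -/
theorem aut_apply_ι_mem_augmentation {K : Type*} [Field K] {V : Type*} [AddCommGroup V]
    [Module K V] (f : ExteriorAlgebra K V ≃ₐ[K] ExteriorAlgebra K V) :
    (∀ v : V, algebraMapInv (f (ExteriorAlgebra.ι K v)) = 0) ∧
      ∀ k : ℕ, 1 ≤ k → ∀ x ∈ ⋀[K]^k V, f x ∈ ⨆ j : ℕ, ⨆ _ : k ≤ j, ⋀[K]^j V := by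
  set S : ℕ → Submodule K (ExteriorAlgebra K V) :=
    fun k => ⨆ j : ℕ, ⨆ _ : k ≤ j, ⋀[K]^j V with hS
  have hSle : ∀ {i j : ℕ}, i ≤ j → ⋀[K]^j V ≤ S i := fun {i j} h =>
    le_iSup_of_le j (le_iSup_of_le h le_rfl)
  have hS0 : S 0 = ⊤ := by
    rw [hS]
    simp only [Nat.zero_le, iSup_pos]
    exact (DirectSum.Decomposition.isInternal
      (fun i : ℕ => ⋀[K]^i V)).submodule_iSup_eq_top
  have hmul : ∀ a b : ℕ, S a * S b ≤ S (a + b) := by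
    intro a b
    rw [hS]
    simp only [Submodule.iSup_mul, Submodule.mul_iSup]
    refine iSup₂_le fun i hi => iSup₂_le fun j hj => ?_
    calc ⋀[K]^j V * ⋀[K]^i V = ⋀[K]^(j + i) V := (pow_add _ j i).symm
      _ ≤ S (a + b) := hSle (add_le_add hj hi)
  -- part 1
  have h1 : ∀ v : V, algebraMapInv (f (ExteriorAlgebra.ι K v)) = 0 := by
    intro v
    have hsq : (algebraMapInv (f (ExteriorAlgebra.ι K v)) : K) ^ 2 = 0 := by
      rw [sq, ← map_mul, ← map_mul, ι_sq_zero, map_zero, map_zero]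
    exact pow_eq_zero_iff two_ne_zero |>.mp hsq
  refine ⟨h1, ?_⟩
  -- every element minus its scalar part lies in `S 1`
  have key : ∀ x : ExteriorAlgebra K V,
      x - algebraMap K (ExteriorAlgebra K V) (algebraMapInv x) ∈ S 1 := by
    intro x
    induction x using ExteriorAlgebra.induction with
    | algebraMap r =>
      rw [algebraMap_leftInverse, sub_self]
      exact Submodule.zero_mem _
    | ι v =>
      have h0 : algebraMapInv (ExteriorAlgebra.ι K v) = (0 : K) := by
        simp [algebraMapInv]
      rw [h0, map_zero, sub_zero]
      refine hSle le_rfl ?_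
      show ExteriorAlgebra.ι K v ∈
        LinearMap.range (ExteriorAlgebra.ι K : V →ₗ[K] ExteriorAlgebra K V) ^ 1
      rw [pow_one]
      exact LinearMap.mem_range_self _ v
    | mul a b ha hb =>
      have hab : a * b - algebraMap K (ExteriorAlgebra K V) (algebraMapInv (a * b)) =
          (a - algebraMap K (ExteriorAlgebra K V) (algebraMapInv a)) * b +
            algebraMapInv a • (b - algebraMap K (ExteriorAlgebra K V) (algebraMapInv b)) := by
        rw [map_mul, map_mul, Algebra.smul_def]
        noncomm_ring
      rw [hab]
      refine Submodule.add_mem _ ?_ (Submodule.smul_mem _ _ hb)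
      have : (a - algebraMap K (ExteriorAlgebra K V) (algebraMapInv a)) * b ∈ S 1 * S 0 :=
        Submodule.mul_mem_mul ha (hS0 ▸ Submodule.mem_top)
      exact hmul 1 0 this
    | add a b ha hb =>
      have hab : a + b - algebraMap K (ExteriorAlgebra K V) (algebraMapInv (a + b)) =
          (a - algebraMap K (ExteriorAlgebra K V) (algebraMapInv a)) +
            (b - algebraMap K (ExteriorAlgebra K V) (algebraMapInv b)) := by
        rw [map_add, map_add]; abel
      rw [hab]
      exact Submodule.add_mem _ ha hb
  have hι : ∀ v : V, f (ExteriorAlgebra.ι K v) ∈ S 1 := by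
    intro v
    have := key (f (ExteriorAlgebra.ι K v))
    rwa [h1 v, map_zero, sub_zero] at this
  -- main induction: `f` maps `⋀^n` into `S n`
  have main : ∀ n : ℕ, ∀ x ∈ ⋀[K]^n V, f x ∈ S n := by
    intro n x hx
    refine Submodule.pow_induction_on_left'
      (M := LinearMap.range (ExteriorAlgebra.ι K : V →ₗ[K] ExteriorAlgebra K V))
      (C := fun n x _ => f x ∈ S n) ?_ ?_ ?_ hx
    · intro r
      rw [AlgEquiv.commutes]
      exact hS0 ▸ Submodule.mem_top
    · intro x y i hx hy hfx hfy
      rw [map_add]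
      exact Submodule.add_mem _ hfx hfy
    · rintro m ⟨v, rfl⟩ i x hxi hfx
      rw [map_mul]
      have : f (ExteriorAlgebra.ι K v) * f x ∈ S 1 * S i :=
        Submodule.mul_mem_mul (hι v) hfx
      have h2 := hmul 1 i this
      rwa [Nat.add_comm 1 i] at h2
  exact fun k _ x hx => main k x hx
end

section
/- Let K be a field of characteristic ≠ 2 and V a finite-dimensional K-vector space. Let a be an element of the odd part A_odd of the exterior algebra of V, and let D_a(x) = a*x - x*a be the corresponding inner derivation. Then the map exp(D_a) = id + D_a, sending x to x + a*x - x*a, is a K-algebra automorphism of ⋀ V: it is K-linear, bijective, and multiplicative, i.e. (id + D_a)(x*y) = ((id + D_a)(x)) * ((id + D_a)(y)) for all x, y. -/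
/-!
Even elements of `⋀ V` are central and odd elements anticommute, so for odd `a` and `x = e + b`
split into even and odd parts, `⁅a, x⁆ = 2 a b`, and `2 a² = 0`. Moving `a` past odd factors
then shows `⁅a, x⁆ ⁅a, y⁆ = 0` and `⁅a, ⁅a, x⁆⁆ = 0`. The first makes `id + ⁅a, ·⁆`
multiplicative, because `⁅a, ·⁆` is a derivation; the second makes `id - ⁅a, ·⁆` its inverse.
-/

section InnerDerivation

variable {A : Type*} [Ring A] (a : A)

theorem add_lie_mul_add_lie (x y : A) :
    (x + ⁅a, x⁆) * (y + ⁅a, y⁆) = x * y + ⁅a, x * y⁆ + ⁅a, x⁆ * ⁅a, y⁆ := by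
  simp only [Ring.lie_def]
  noncomm_ring

theorem bijective_add_lie_of_lie_lie_eq_zero (h : ∀ x : A, ⁅a, ⁅a, x⁆⁆ = 0) :
    Function.Bijective fun x : A => x + ⁅a, x⁆ := by
  refine Function.bijective_iff_has_inverse.mpr
    ⟨fun x => x - ⁅a, x⁆, fun x => ?_, fun x => ?_⟩
  · calc x + ⁅a, x⁆ - ⁅a, x + ⁅a, x⁆⁆ = x - ⁅a, ⁅a, x⁆⁆ := by
          simp only [Ring.lie_def]; noncomm_ring
      _ = x := by rw [h, sub_zero]
  · calc x - ⁅a, x⁆ + ⁅a, x - ⁅a, x⁆⁆ = x - ⁅a, ⁅a, x⁆⁆ := by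
          simp only [Ring.lie_def]; noncomm_ring
      _ = x := by rw [h, sub_zero]

end InnerDerivation

namespace ExteriorAlgebra

variable {R : Type*} [CommRing R] {M : Type*} [AddCommGroup M] [Module R M]

theorem ι_mul_eq_neg_one_pow_smul_mul_ι {n : ℕ} {x : ExteriorAlgebra R M}
    (hx : x ∈ ⋀[R]^n M) (v : M) : ι R v * x = (-1 : R) ^ n • (x * ι R v) := by
  induction hx using Submodule.pow_induction_on_left' with
  | algebraMap r => simp [Algebra.commutes]
  | add x y i _ _ ihx ihy => simp only [mul_add, add_mul, smul_add, ihx, ihy]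
  | mem_mul m hm i x _ ih =>
    obtain ⟨w, rfl⟩ := hm
    have hvw : ι R v * ι R w = -(ι R w * ι R v) :=
      eq_neg_of_add_eq_zero_left (ι_add_mul_swap v w)
    calc ι R v * (ι R w * x) = -(ι R w * (ι R v * x)) := by
          rw [← mul_assoc, hvw, neg_mul, mul_assoc]
      _ = (-1 : R) ^ (i + 1) • (ι R w * x * ι R v) := by
          rw [ih, mul_smul_comm, pow_succ, mul_neg_one, neg_smul, mul_assoc]

theorem mul_eq_neg_one_pow_smul_mul {m n : ℕ} {x y : ExteriorAlgebra R M}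
    (hx : x ∈ ⋀[R]^m M) (hy : y ∈ ⋀[R]^n M) : x * y = (-1 : R) ^ (m * n) • (y * x) := by
  induction hx using Submodule.pow_induction_on_left' with
  | algebraMap r => simp [Algebra.commutes]
  | add x x' i _ _ ihx ihx' => simp only [mul_add, add_mul, smul_add, ihx, ihx']
  | mem_mul m hm i x _ ih =>
    obtain ⟨w, rfl⟩ := hm
    rw [mul_assoc, ih, mul_smul_comm, ← mul_assoc, ι_mul_eq_neg_one_pow_smul_mul_ι hy,
      smul_mul_assoc, smul_smul, ← pow_add, mul_assoc, Nat.succ_mul]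

theorem mul_comm_of_mem_even {e : ExteriorAlgebra R M} (he : e ∈ ⨆ i : ℕ, ⋀[R]^(2 * i) M)
    (x : ExteriorAlgebra R M) : e * x = x * e := by
  induction x using DirectSum.Decomposition.inductionOn (fun i : ℕ => ⋀[R]^i M) with
  | zero => simp
  | add x y hx hy => rw [mul_add, add_mul, hx, hy]
  | homogeneous x =>
    refine Submodule.iSup_induction (motive := fun e => e * (x : ExteriorAlgebra R M) = x * e)
      _ he (fun i e he => ?_) (by simp) (fun e e' he he' => by rw [mul_add, add_mul, he, he'])
    rw [mul_eq_neg_one_pow_smul_mul he x.2, ((even_two_mul i).mul_right _).neg_one_pow, one_smul]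

theorem mul_eq_neg_mul_of_mem_odd {u w : ExteriorAlgebra R M}
    (hu : u ∈ ⨆ i : ℕ, ⋀[R]^(2 * i + 1) M) (hw : w ∈ ⨆ i : ℕ, ⋀[R]^(2 * i + 1) M) :
    u * w = -(w * u) := by
  refine Submodule.iSup_induction (motive := fun u => u * w = -(w * u)) _ hu
    (fun i u hu => ?_) (by simp) (fun u u' hu hu' => by rw [add_mul, mul_add, hu, hu', neg_add])
  refine Submodule.iSup_induction (motive := fun w => u * w = -(w * u)) _ hw
    (fun j w hw => ?_) (by simp) (fun w w' hw hw' => by rw [mul_add, add_mul, hw, hw', neg_add])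
  rw [mul_eq_neg_one_pow_smul_mul hu hw, Odd.neg_one_pow (Nat.odd_mul.mpr ⟨⟨i, rfl⟩, ⟨j, rfl⟩⟩),
    neg_one_smul]

theorem exists_even_add_odd (x : ExteriorAlgebra R M) :
    ∃ e ∈ ⨆ i : ℕ, ⋀[R]^(2 * i) M, ∃ b ∈ ⨆ i : ℕ, ⋀[R]^(2 * i + 1) M, e + b = x := by
  induction x using DirectSum.Decomposition.inductionOn (fun i : ℕ => ⋀[R]^i M) with
  | zero => exact ⟨0, zero_mem _, 0, zero_mem _, add_zero 0⟩
  | add x y hx hy =>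
    obtain ⟨e, he, b, hb, rfl⟩ := hx
    obtain ⟨e', he', b', hb', rfl⟩ := hy
    exact ⟨e + e', add_mem he he', b + b', add_mem hb hb', add_add_add_comm e e' b b'⟩
  | @homogeneous n x =>
    obtain ⟨k, rfl | rfl⟩ := Nat.even_or_odd' n
    · exact ⟨x, Submodule.mem_iSup_of_mem k x.2, 0, zero_mem _, add_zero _⟩
    · exact ⟨0, zero_mem _, x, Submodule.mem_iSup_of_mem k x.2, zero_add _⟩

section OddInnerDerivation

variable {a : ExteriorAlgebra R M}

theorem two_mul_mul_self_of_mem_odd (ha : a ∈ ⨆ i : ℕ, ⋀[R]^(2 * i + 1) M) : 2 * (a * a) = 0 := by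
  rw [two_mul]
  nth_rewrite 1 [mul_eq_neg_mul_of_mem_odd ha ha]
  exact neg_add_cancel _

theorem exists_lie_eq_two_mul_of_mem_odd (ha : a ∈ ⨆ i : ℕ, ⋀[R]^(2 * i + 1) M)
    (x : ExteriorAlgebra R M) :
    ∃ b ∈ ⨆ i : ℕ, ⋀[R]^(2 * i + 1) M, ⁅a, x⁆ = 2 * (a * b) := by
  obtain ⟨e, he, b, hb, rfl⟩ := exists_even_add_odd x
  refine ⟨b, hb, ?_⟩
  rw [Ring.lie_def, mul_add, add_mul, mul_comm_of_mem_even he a, mul_eq_neg_mul_of_mem_odd hb ha,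
    two_mul]
  abel

theorem lie_mul_lie_eq_zero_of_mem_odd (ha : a ∈ ⨆ i : ℕ, ⋀[R]^(2 * i + 1) M)
    (x y : ExteriorAlgebra R M) : ⁅a, x⁆ * ⁅a, y⁆ = 0 := by
  obtain ⟨b, hb, hx⟩ := exists_lie_eq_two_mul_of_mem_odd ha x
  obtain ⟨c, -, hy⟩ := exists_lie_eq_two_mul_of_mem_odd ha y
  calc ⁅a, x⁆ * ⁅a, y⁆ = 2 * 2 * (a * (b * a) * c) := by rw [hx, hy]; noncomm_ring
    _ = -(2 * (2 * (a * a)) * b * c) := by rw [mul_eq_neg_mul_of_mem_odd hb ha]; noncomm_ring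
    _ = 0 := by rw [two_mul_mul_self_of_mem_odd ha]; simp

theorem lie_lie_eq_zero_of_mem_odd (ha : a ∈ ⨆ i : ℕ, ⋀[R]^(2 * i + 1) M)
    (x : ExteriorAlgebra R M) : ⁅a, ⁅a, x⁆⁆ = 0 := by
  obtain ⟨b, hb, hx⟩ := exists_lie_eq_two_mul_of_mem_odd ha x
  calc ⁅a, ⁅a, x⁆⁆ = 2 * (a * a * b) - 2 * (a * (b * a)) := by
        rw [hx, Ring.lie_def]; noncomm_ring
    _ = 2 * (2 * (a * a)) * b := by rw [mul_eq_neg_mul_of_mem_odd hb ha]; noncomm_ring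
    _ = 0 := by rw [two_mul_mul_self_of_mem_odd ha]; simp

end OddInnerDerivation

end ExteriorAlgebra

open ExteriorAlgebra

theorem exp_inner_derivation_is_automorphism_general {K : Type*} [Field K] {V : Type*}
    [AddCommGroup V] [Module K V]
    {a : ExteriorAlgebra K V} (ha : a ∈ (⨆ i : ℕ, ⋀[K]^(2 * i + 1) V)) :
    (∀ (c : K) (x y : ExteriorAlgebra K V),
        (fun z : ExteriorAlgebra K V => z + (a * z - z * a)) (c • x + y) =
          c • (fun z : ExteriorAlgebra K V => z + (a * z - z * a)) x +
            (fun z : ExteriorAlgebra K V => z + (a * z - z * a)) y) ∧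
      Function.Bijective (fun z : ExteriorAlgebra K V => z + (a * z - z * a)) ∧
      ∀ x y : ExteriorAlgebra K V,
        (fun z : ExteriorAlgebra K V => z + (a * z - z * a)) (x * y) =
          (fun z : ExteriorAlgebra K V => z + (a * z - z * a)) x *
            (fun z : ExteriorAlgebra K V => z + (a * z - z * a)) y := by
  refine ⟨fun c x y => ?_,
    bijective_add_lie_of_lie_lie_eq_zero a (lie_lie_eq_zero_of_mem_odd ha), fun x y => ?_⟩
  · simp only [mul_add, add_mul, mul_smul_comm, smul_mul_assoc, smul_add, smul_sub]
    abel
  · show x * y + ⁅a, x * y⁆ = (x + ⁅a, x⁆) * (y + ⁅a, y⁆)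
    rw [add_lie_mul_add_lie, lie_mul_lie_eq_zero_of_mem_odd ha, add_zero]

/-- For an odd element `a` of the exterior algebra, the truncated exponential
`exp(D_a) = id + D_a : x ↦ x + (a*x - x*a)` of the inner derivation `D_a` is a `K`-algebra
automorphism: it is `K`-linear, bijective and multiplicative. -/
theorem exp_inner_derivation_is_automorphism {K : Type*} [Field K] {V : Type*}
    [AddCommGroup V] [Module K V] [FiniteDimensional K V] (hchar : ringChar K ≠ 2)
    {a : ExteriorAlgebra K V} (ha : a ∈ (⨆ i : ℕ, ⋀[K]^(2 * i + 1) V)) :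
    (∀ (c : K) (x y : ExteriorAlgebra K V),
        (fun z : ExteriorAlgebra K V => z + (a * z - z * a)) (c • x + y) =
          c • (fun z : ExteriorAlgebra K V => z + (a * z - z * a)) x +
            (fun z : ExteriorAlgebra K V => z + (a * z - z * a)) y) ∧
      Function.Bijective (fun z : ExteriorAlgebra K V => z + (a * z - z * a)) ∧
      ∀ x y : ExteriorAlgebra K V,
        (fun z : ExteriorAlgebra K V => z + (a * z - z * a)) (x * y) =
          (fun z : ExteriorAlgebra K V => z + (a * z - z * a)) x *
            (fun z : ExteriorAlgebra K V => z + (a * z - z * a)) y :=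
  exp_inner_derivation_is_automorphism_general ha
end

section
/- Let K be a field of characteristic ≠ 2 and V a finite-dimensional K-vector space. Every K-algebra automorphism σ of the exterior algebra of V can be written uniquely as σ = ν ∘ (map of τ), where τ is a linear automorphism of V, map of τ is the algebra automorphism of ⋀ V induced functorially by τ (sending ι(v_1) * ... * ι(v_m) to ι(τ v_1) * ... * ι(τ v_m)), and ν is a K-algebra automorphism of ⋀ V that acts trivially modulo higher degree, i.e. for every v ∈ V, ν(ι v) - ι v lies in M^2, the square of the augmentation ideal. Moreover, the assignment τ ↦ (map of τ) is an injective group homomorphism GL(V) → Aut_K(⋀ V). -/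
open ExteriorAlgebra

section Aux

variable {K : Type*} [Field K] {V : Type*} [AddCommGroup V] [Module K V]

theorem aux_sq (I : Ideal (ExteriorAlgebra K V)) : I ^ 2 = I * I := by
  letI : Module (ExteriorAlgebra K V) (ExteriorAlgebra K V) := Semiring.toModule
  rw [Submodule.pow_succ (M := I), Submodule.pow_one (M := I)]

theorem aux_mul_induction {I J : Ideal (ExteriorAlgebra K V)} {C : ExteriorAlgebra K V → Prop}
    {r : ExteriorAlgebra K V} (hr : r ∈ I * J) (hm : ∀ m ∈ I, ∀ n ∈ J, C (m * n))
    (ha : ∀ x y, C x → C y → C (x + y)) : C r := by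
  letI : Module (ExteriorAlgebra K V) (ExteriorAlgebra K V) := Semiring.toModule
  exact Submodule.mul_induction_on hr hm ha

theorem aux_mul_mem_mul {I J : Ideal (ExteriorAlgebra K V)} {m n : ExteriorAlgebra K V}
    (hm : m ∈ I) (hn : n ∈ J) : m * n ∈ I * J := by
  letI : Module (ExteriorAlgebra K V) (ExteriorAlgebra K V) := Semiring.toModule
  exact Submodule.mul_mem_mul hm hn

theorem aux_snd_mul (a b : ExteriorAlgebra K V) :
    ιInv (a * b) = algebraMapInv a • ιInv b + algebraMapInv b • ιInv a := by
  letI : Module Kᵐᵒᵖ V := Module.compHom _ ((RingHom.id K).fromOpposite mul_comm)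
  haveI : IsCentralScalar K V := ⟨fun r m => rfl⟩
  have hfst : ∀ x : ExteriorAlgebra K V, (toTrivSqZeroExt x).fst = algebraMapInv x := by
    have : (TrivSqZeroExt.fstHom K K V).comp (toTrivSqZeroExt : ExteriorAlgebra K V →ₐ[K] _)
        = (algebraMapInv : ExteriorAlgebra K V →ₐ[K] K) := by
      apply ExteriorAlgebra.hom_ext
      ext v
      simp [algebraMapInv]
    intro x
    exact congrArg (fun f => f x) (congrArg DFunLike.coe this)
  have hsnd : ∀ x : ExteriorAlgebra K V, ιInv x = (toTrivSqZeroExt x).snd := fun _ => rfl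
  rw [hsnd, hsnd, hsnd, map_mul, TrivSqZeroExt.snd_mul, hfst, hfst, op_smul_eq_smul]

theorem aux_iInv_one : ιInv (1 : ExteriorAlgebra K V) = 0 := by
  have h := aux_snd_mul (1 : ExteriorAlgebra K V) 1
  simp only [mul_one, map_one, one_smul] at h
  have h2 : (0 : V) = ιInv (1 : ExteriorAlgebra K V) := by
    have := congrArg (fun z => z - ιInv (1 : ExteriorAlgebra K V)) h
    simpa using this
  exact h2.symm

theorem aux_iInv_algebraMap (r : K) : ιInv (algebraMap K (ExteriorAlgebra K V) r) = 0 := by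
  rw [Algebra.algebraMap_eq_smul_one, map_smul, aux_iInv_one, smul_zero]

theorem aux_iInv_sq (x : ExteriorAlgebra K V)
    (hx : x ∈ (RingHom.ker (algebraMapInv : ExteriorAlgebra K V →ₐ[K] K)) ^ 2) :
    ιInv x = 0 := by
  rw [aux_sq] at hx
  refine aux_mul_induction (C := fun z => ιInv z = 0) hx (fun a ha b hb => ?_)
    (fun x y hx hy => ?_)
  · show ιInv (a * b) = 0
    rw [aux_snd_mul, RingHom.mem_ker.mp ha, RingHom.mem_ker.mp hb, zero_smul, zero_smul,
      add_zero]
  · show ιInv (x + y) = 0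
    exact by rw [map_add, hx, hy, add_zero]

theorem aux_sq_mul_right (x c : ExteriorAlgebra K V)
    (hx : x ∈ (RingHom.ker (algebraMapInv : ExteriorAlgebra K V →ₐ[K] K)) ^ 2) :
    x * c ∈ (RingHom.ker (algebraMapInv : ExteriorAlgebra K V →ₐ[K] K)) ^ 2 := by
  rw [aux_sq] at hx ⊢
  refine aux_mul_induction (C := fun r => r * c ∈ _) hx (fun a ha b hb => ?_)
    (fun x y hx hy => ?_)
  · show a * b * c ∈ _ * _
    rw [mul_assoc]
    refine aux_mul_mem_mul ha ?_
    rw [RingHom.mem_ker] at hb ⊢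
    rw [map_mul, hb, zero_mul]
  · show (x + y) * c ∈ _ * _
    rw [add_mul]
    exact add_mem hx hy

theorem aux_key (y : ExteriorAlgebra K V) :
    y - algebraMap K (ExteriorAlgebra K V) (algebraMapInv y) - ι K (ιInv y) ∈
      (RingHom.ker (algebraMapInv : ExteriorAlgebra K V →ₐ[K] K)) ^ 2 := by
  induction y using ExteriorAlgebra.induction with
  | algebraMap r =>
      rw [aux_iInv_algebraMap, map_zero, sub_zero, algebraMap_leftInverse, sub_self]
      exact zero_mem _
  | ι v =>
      have h1 : (algebraMapInv : ExteriorAlgebra K V →ₐ[K] K) (ι K v) = 0 := by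
        simp [algebraMapInv]
      rw [h1, map_zero, sub_zero, ι_leftInverse, sub_self]
      exact zero_mem _
  | mul a b ha hb =>
      have hιa : (ι K (ιInv a) : ExteriorAlgebra K V) ∈
          RingHom.ker (algebraMapInv : ExteriorAlgebra K V →ₐ[K] K) := by
        rw [RingHom.mem_ker]; simp [algebraMapInv]
      have hιb : (ι K (ιInv b) : ExteriorAlgebra K V) ∈
          RingHom.ker (algebraMapInv : ExteriorAlgebra K V →ₐ[K] K) := by
        rw [RingHom.mem_ker]; simp [algebraMapInv]
      have hexp : a * b - algebraMap K (ExteriorAlgebra K V) (algebraMapInv (a * b))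
            - ι K (ιInv (a * b))
          = algebraMap K (ExteriorAlgebra K V) (algebraMapInv a) *
              (b - algebraMap K (ExteriorAlgebra K V) (algebraMapInv b) - ι K (ιInv b))
            + ι K (ιInv a) *
              (b - algebraMap K (ExteriorAlgebra K V) (algebraMapInv b) - ι K (ιInv b))
            + ι K (ιInv a) * ι K (ιInv b)
            + (a - algebraMap K (ExteriorAlgebra K V) (algebraMapInv a) - ι K (ιInv a)) * b := by
        rw [aux_snd_mul, map_mul, map_add, map_smul, map_smul, map_mul,
          Algebra.smul_def, Algebra.smul_def]
        simp only [mul_sub, sub_mul]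
        rw [show ι K (ιInv a) * algebraMap K (ExteriorAlgebra K V) (algebraMapInv b)
            = algebraMap K (ExteriorAlgebra K V) (algebraMapInv b) * ι K (ιInv a) from
          (Algebra.commutes _ _).symm]
        abel
      rw [hexp]
      refine add_mem (add_mem (add_mem ?_ ?_) ?_) ?_
      · exact Ideal.mul_mem_left _ _ hb
      · exact Ideal.mul_mem_left _ _ hb
      · rw [aux_sq]; exact aux_mul_mem_mul hιa hιb
      · exact aux_sq_mul_right _ _ ha
  | add a b ha hb =>
      have hexp : a + b - algebraMap K (ExteriorAlgebra K V) (algebraMapInv (a + b))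
            - ι K (ιInv (a + b))
          = (a - algebraMap K (ExteriorAlgebra K V) (algebraMapInv a) - ι K (ιInv a))
            + (b - algebraMap K (ExteriorAlgebra K V) (algebraMapInv b) - ι K (ιInv b)) := by
        rw [map_add, map_add, map_add, map_add]
        abel
      rw [hexp]
      exact add_mem ha hb

end Aux

/-- Every `K`-algebra automorphism `σ` of the exterior algebra factors uniquely as
`σ = ν ∘ map τ`, where `τ ∈ GL(V)` and `ν` is an automorphism acting trivially modulo
the square of the augmentation ideal (i.e. `ν (ι v) - ι v ∈ M²` for all `v`); moreover
`τ ↦ map τ` is an injective group homomorphism `GL(V) → Aut_K(⋀ V)`. -/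
theorem aut_decomposition_semidirect {K : Type*} [Field K] {V : Type*} [AddCommGroup V]
    [Module K V] [FiniteDimensional K V] (hchar : ringChar K ≠ 2)
    (σ : ExteriorAlgebra K V ≃ₐ[K] ExteriorAlgebra K V) :
    (∃! p : (V ≃ₗ[K] V) × (ExteriorAlgebra K V ≃ₐ[K] ExteriorAlgebra K V),
        (∀ v : V, p.2 (ExteriorAlgebra.ι K v) - ExteriorAlgebra.ι K v ∈
          (RingHom.ker (algebraMapInv : ExteriorAlgebra K V →ₐ[K] K)) ^ 2) ∧
        ∀ x : ExteriorAlgebra K V,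
          σ x = p.2 (ExteriorAlgebra.map (p.1 : V →ₗ[K] V) x)) ∧
      ∃ g : (V ≃ₗ[K] V) →* (ExteriorAlgebra K V ≃ₐ[K] ExteriorAlgebra K V),
        Function.Injective g ∧
          ∀ (τ : V ≃ₗ[K] V) (x : ExteriorAlgebra K V),
            g τ x = ExteriorAlgebra.map (τ : V →ₗ[K] V) x := by
  classical
  set I : Ideal (ExteriorAlgebra K V) :=
    RingHom.ker (algebraMapInv : ExteriorAlgebra K V →ₐ[K] K) with hIdef
  have h0 : ∀ (e : ExteriorAlgebra K V ≃ₐ[K] ExteriorAlgebra K V) (v : V),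
      (algebraMapInv : ExteriorAlgebra K V →ₐ[K] K) (e (ι K v)) = 0 := by
    intro e v
    have hsq : (algebraMapInv : ExteriorAlgebra K V →ₐ[K] K) (e (ι K v)) ^ 2 = 0 := by
      rw [sq, ← map_mul, ← map_mul, ι_sq_zero, map_zero, map_zero]
    exact pow_eq_zero_iff two_ne_zero |>.1 hsq
  have hInv0 : ∀ (e : ExteriorAlgebra K V ≃ₐ[K] ExteriorAlgebra K V)
      (x : ExteriorAlgebra K V),
      (algebraMapInv : ExteriorAlgebra K V →ₐ[K] K) (e x)
        = (algebraMapInv : ExteriorAlgebra K V →ₐ[K] K) x := by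
    intro e
    have heq : ((algebraMapInv : ExteriorAlgebra K V →ₐ[K] K).comp e.toAlgHom)
        = (algebraMapInv : ExteriorAlgebra K V →ₐ[K] K) := by
      apply ExteriorAlgebra.hom_ext
      ext v
      simp only [LinearMap.coe_comp, Function.comp_apply, AlgHom.toLinearMap_apply,
        AlgHom.coe_comp, AlgEquiv.coe_algHom]
      rw [h0 e v]
      simp [algebraMapInv]
    intro x
    exact congrArg (fun f => f x) (congrArg DFunLike.coe heq)
  have hI : ∀ (e : ExteriorAlgebra K V ≃ₐ[K] ExteriorAlgebra K V)
      (x : ExteriorAlgebra K V), x ∈ I → e x ∈ I := by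
    intro e x hx
    rw [hIdef, RingHom.mem_ker] at hx ⊢
    rw [hInv0 e x, hx]
  have hJ : ∀ (e : ExteriorAlgebra K V ≃ₐ[K] ExteriorAlgebra K V)
      (x : ExteriorAlgebra K V), x ∈ I ^ 2 → e x ∈ I ^ 2 := by
    intro e x hx
    rw [aux_sq] at hx ⊢
    refine aux_mul_induction (C := fun r => e r ∈ I * I) hx
      (fun m hm n hn => ?_) (fun x y hx hy => ?_)
    · show e (m * n) ∈ I * I
      rw [map_mul]
      exact aux_mul_mem_mul (hI e m hm) (hI e n hn)
    · show e (x + y) ∈ I * I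
      rw [map_add]
      exact add_mem hx hy
  set t : (ExteriorAlgebra K V ≃ₐ[K] ExteriorAlgebra K V) → (V →ₗ[K] V) :=
    fun e => ιInv ∘ₗ (e.toLinearMap ∘ₗ ι K) with htdef
  have ht : ∀ e v, t e v = ιInv (e (ι K v)) := fun _ _ => rfl
  have hres : ∀ (e : ExteriorAlgebra K V ≃ₐ[K] ExteriorAlgebra K V) (v : V),
      e (ι K v) - ι K (t e v) ∈ I ^ 2 := by
    intro e v
    have hk := aux_key (e (ι K v))
    rw [h0 e v, map_zero, sub_zero] at hk
    exact hk
  have hcomp : ∀ (e e' : ExteriorAlgebra K V ≃ₐ[K] ExteriorAlgebra K V) (v : V),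
      t e' (t e v) = t (e.trans e') v := by
    intro e e' v
    have h1 := hres e v
    calc t e' (t e v) = ιInv (e' (ι K (t e v))) := rfl
      _ = ιInv (e' (e (ι K v) - (e (ι K v) - ι K (t e v)))) := by rw [sub_sub_cancel]
      _ = ιInv (e' (e (ι K v))) - ιInv (e' (e (ι K v) - ι K (t e v))) := by
          rw [map_sub, map_sub]
      _ = ιInv (e' (e (ι K v))) := by rw [aux_iInv_sq _ (hJ e' _ h1), sub_zero]
      _ = t (e.trans e') v := rfl
  have hid : ∀ v : V, t (AlgEquiv.refl (R := K) (A₁ := ExteriorAlgebra K V)) v = v := by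
    intro v
    rw [ht]
    exact ι_leftInverse v
  have hsts : σ.symm.trans σ = AlgEquiv.refl := by
    ext x; simp
  have hsts' : σ.trans σ.symm = AlgEquiv.refl := by
    ext x; simp
  set τ : V ≃ₗ[K] V := LinearEquiv.ofLinear (t σ) (t σ.symm)
    (by ext v
        simp only [LinearMap.coe_comp, Function.comp_apply, LinearMap.id_coe, id_eq]
        rw [hcomp σ.symm σ v, hsts, hid v])
    (by ext v
        simp only [LinearMap.coe_comp, Function.comp_apply, LinearMap.id_coe, id_eq]
        rw [hcomp σ σ.symm v, hsts', hid v]) with hτdef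
  have mapinv : ∀ (f : V ≃ₗ[K] V) (x : ExteriorAlgebra K V),
      ExteriorAlgebra.map (f.symm : V →ₗ[K] V) (ExteriorAlgebra.map (f : V →ₗ[K] V) x) = x := by
    intro f x
    rw [← AlgHom.comp_apply, ExteriorAlgebra.map_comp_map]
    have : ((f.symm : V →ₗ[K] V) ∘ₗ (f : V →ₗ[K] V)) = LinearMap.id := by
      ext v; simp
    rw [this, ExteriorAlgebra.map_id]
    rfl
  have mapinv' : ∀ (f : V ≃ₗ[K] V) (x : ExteriorAlgebra K V),
      ExteriorAlgebra.map (f : V →ₗ[K] V) (ExteriorAlgebra.map (f.symm : V →ₗ[K] V) x) = x := by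
    intro f x
    have := mapinv f.symm x
    simpa using this
  set me : (V ≃ₗ[K] V) → (ExteriorAlgebra K V ≃ₐ[K] ExteriorAlgebra K V) := fun f =>
    AlgEquiv.ofAlgHom (ExteriorAlgebra.map (f : V →ₗ[K] V))
      (ExteriorAlgebra.map (f.symm : V →ₗ[K] V))
      (by ext v; simp) (by ext v; simp) with hmedef
  have hme : ∀ (f : V ≃ₗ[K] V) (x : ExteriorAlgebra K V),
      me f x = ExteriorAlgebra.map (f : V →ₗ[K] V) x := fun _ _ => rfl
  set ν : ExteriorAlgebra K V ≃ₐ[K] ExteriorAlgebra K V := (me τ).symm.trans σ with hνdef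
  have hν : ∀ x, ν x = σ (ExteriorAlgebra.map (τ.symm : V →ₗ[K] V) x) := fun _ => rfl
  have hτt : ∀ v, τ v = t σ v := fun _ => rfl
  constructor
  · refine ⟨(τ, ν), ⟨?_, ?_⟩, ?_⟩
    · intro v
      show ν (ι K v) - ι K v ∈ I ^ 2
      rw [hν, map_apply_ι]
      have h1 := hres σ (τ.symm v)
      have h2 : t σ (τ.symm v) = v := by
        rw [← hτt, LinearEquiv.apply_symm_apply]
      rw [h2] at h1
      exact h1
    · intro x
      show σ x = ν (ExteriorAlgebra.map (τ : V →ₗ[K] V) x)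
      rw [hν, mapinv]
    · rintro ⟨τ₁, ν₁⟩ ⟨h1, h2⟩
      have hτ1 : τ₁ = τ := by
        ext v
        have ha := h2 (ι K v)
        rw [map_apply_ι] at ha
        have hb := h1 (τ₁ v)
        have hτv : τ v = τ₁ v := by
          rw [hτt, ht, ha]
          show ιInv (ν₁ (ι K (τ₁ v))) = τ₁ v
          have hsplit : ν₁ (ι K (τ₁ v))
              = (ν₁ (ι K (τ₁ v)) - ι K (τ₁ v)) + ι K (τ₁ v) := by abel
          rw [hsplit, map_add, aux_iInv_sq _ hb, zero_add, ι_leftInverse]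
        exact hτv.symm
      have hν1 : ν₁ = ν := by
        ext x
        have hx := h2 (ExteriorAlgebra.map (τ₁.symm : V →ₗ[K] V) x)
        rw [show ((τ₁, ν₁).1 : V →ₗ[K] V) = (τ₁ : V →ₗ[K] V) from rfl, mapinv' τ₁ x] at hx
        rw [← hx, hν, hτ1]
      exact Prod.ext hτ1 hν1
  · refine ⟨{ toFun := me, map_one' := ?_, map_mul' := ?_ }, ?_, ?_⟩
    · apply AlgEquiv.ext
      intro x
      show ExteriorAlgebra.map ((1 : V ≃ₗ[K] V) : V →ₗ[K] V) x = x
      have h1 : ((1 : V ≃ₗ[K] V) : V →ₗ[K] V) = LinearMap.id := rfl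
      rw [h1, ExteriorAlgebra.map_id]
      rfl
    · intro f g
      apply AlgEquiv.ext
      intro x
      show ExteriorAlgebra.map ((f * g : V ≃ₗ[K] V) : V →ₗ[K] V) x = (me f) ((me g) x)
      have hco : ((f * g : V ≃ₗ[K] V) : V →ₗ[K] V)
          = (f : V →ₗ[K] V) ∘ₗ (g : V →ₗ[K] V) := rfl
      rw [hco, ← ExteriorAlgebra.map_comp_map, AlgHom.comp_apply, hme, hme]
    · intro f f' hfg
      ext v
      have h2 : (me f) (ι K v) = (me f') (ι K v) := by
        rw [show me f = me f' from hfg]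
      rw [hme, hme, map_apply_ι, map_apply_ι] at h2
      exact (ι_inj K _ _).1 h2
    · intro f x
      exact hme f x
end
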